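/- arXiv:2305.10584 — 3 statements merged into one kernel-verified Lean document; each statement's English description precedes it below -/
import Mathlib

section
/- Let (a,b) ⊂ ℝ be a bounded interval, and let f_k, f ∈ W^{1,1}((a,b)) (identified with their continuous representatives). If f_k → f in L¹((a,b)) and ∫_a^b |f_k'(x)| dx → ∫_a^b |f'(x)| dx, then f_k → f uniformly on (a,b). -/
/-!
Lower semicontinuity of the variation under `L¹` convergence, applied on `[a, u]` and `[v, b]`,
together with the convergence of the total variation, shows that the variation of `f k` on any
`[u, v]` is asymptotically at most that of `g`. Around each point the variation of `g` is small, so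
`f k - g` oscillates little on a neighbourhood, and a function with small oscillation and small
`L¹` norm on an interval is uniformly small there; compactness of `[a, b]` concludes.

For lower semicontinuity, approximate `∫ t in c..d, |g' t|` by a partition sum
`∑ |g (s (j + 1)) - g (s j)|`. Shifting the partition by some `w ∈ (0, η)` at which
`∑ |f k - g| (s j + w)` is at most its average over `w`, hence `O(‖f k - g‖₁ / η)`, compares this
sum with the shifted partition sum of `f k`, which is at most `∫ t in c..d + η, |f' k t|`.
-/

open MeasureTheory Filter Set Topology

noncomputable section

lemma IntervalIntegrable.of_mem_Icc {ψ : ℝ → ℝ} {a b u v : ℝ}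
    (h : IntervalIntegrable ψ volume a b) (hu : u ∈ Icc a b) (hv : v ∈ Icc a b) :
    IntervalIntegrable ψ volume u v :=
  h.mono_set (uIcc_subset_uIcc (Icc_subset_uIcc hu) (Icc_subset_uIcc hv))

lemma IntervalIntegrable.exists_pos_integral_abs_lt {ψ : ℝ → ℝ} {a b ε : ℝ}
    (h : IntervalIntegrable ψ volume a b) (hε : 0 < ε) :
    ∃ δ > 0, ∀ u v, a ≤ u → u ≤ v → v ≤ b → v - u < δ → ∫ t in u..v, |ψ t| < ε := by
  have hV : ContinuousOn (fun x => ∫ t in a..x, |ψ t|) (Icc a b) :=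
    (intervalIntegral.continuousOn_primitive_interval' h.abs left_mem_uIcc).mono Icc_subset_uIcc
  obtain ⟨δ, hδ, hV⟩ := Metric.uniformContinuousOn_iff.mp
    (isCompact_Icc.uniformContinuousOn_of_continuous hV) ε hε
  refine ⟨δ, hδ, fun u v hau huv hvb hlt => ?_⟩
  have hu : u ∈ Icc a b := ⟨hau, huv.trans hvb⟩
  have hv : v ∈ Icc a b := ⟨hau.trans huv, hvb⟩
  have ha : a ∈ Icc a b := ⟨le_rfl, hau.trans hu.2⟩
  have hint : ∫ t in u..v, |ψ t| = (∫ t in a..v, |ψ t|) - ∫ t in a..u, |ψ t| :=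
    (intervalIntegral.integral_interval_sub_left (h.abs.of_mem_Icc ha hv)
      (h.abs.of_mem_Icc ha hu)).symm
  have := hV v hv u hu (by rw [Real.dist_eq, abs_of_nonneg (sub_nonneg.mpr huv)]; exact hlt)
  rw [Real.dist_eq] at this
  exact hint ▸ (le_abs_self _).trans_lt this

lemma exists_partition_mesh_lt {c d δ : ℝ} (hcd : c ≤ d) (hδ : 0 < δ) :
    ∃ (n : ℕ) (s : ℕ → ℝ), Monotone s ∧ s 0 = c ∧ s n = d ∧ ∀ j, s (j + 1) - s j < δ := by
  obtain ⟨n, hn⟩ := exists_nat_gt ((d - c) / δ)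
  have hn0 : (0 : ℝ) < n := (div_nonneg (sub_nonneg.mpr hcd) hδ.le).trans_lt hn
  have hstep : 0 ≤ (d - c) / n := div_nonneg (sub_nonneg.mpr hcd) hn0.le
  refine ⟨n, fun j => c + j * ((d - c) / n), fun i j hij => ?_, by simp, ?_, fun j => ?_⟩
  · have : (i : ℝ) ≤ j := Nat.cast_le.mpr hij
    dsimp only
    gcongr
  · dsimp only
    rw [mul_div_cancel₀ _ hn0.ne']
    ring
  · rw [div_lt_iff₀ hδ] at hn
    dsimp only
    push_cast
    rw [add_one_mul, add_sub_add_left_eq_sub, add_sub_cancel_left, div_lt_iff₀ hn0]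
    linarith

lemma integral_abs_le_abs_integral_add {ψ φ : ℝ → ℝ} {u v η : ℝ} (huv : u ≤ v)
    (hψ : IntervalIntegrable ψ volume u v) (hφ : IntervalIntegrable φ volume u v)
    (hosc : ∀ t ∈ Icc u v, |φ t - φ u| ≤ η) :
    ∫ t in u..v, |ψ t| ≤ |∫ t in u..v, ψ t| + 2 * (∫ t in u..v, |ψ t - φ t|) + 2 * η * (v - u) := by
  have hdiff : IntervalIntegrable (fun t => |ψ t - φ t|) volume u v := (hψ.sub hφ).abs
  have hbound : ∀ c, ∫ t in u..v, (|ψ t - φ t| + c) = (∫ t in u..v, |ψ t - φ t|) + c * (v - u) :=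
    fun c => by
      rw [intervalIntegral.integral_add hdiff intervalIntegrable_const,
        intervalIntegral.integral_const, smul_eq_mul, mul_comm]
  have habs : ∫ t in u..v, |ψ t| ≤ (∫ t in u..v, |ψ t - φ t|) + (|φ u| + η) * (v - u) := by
    rw [← hbound]
    refine intervalIntegral.integral_mono_on huv hψ.abs (hdiff.add intervalIntegrable_const)
      fun t ht => ?_
    have := abs_add_three (ψ t - φ t) (φ t - φ u) (φ u)
    rw [sub_add_sub_cancel, sub_add_cancel] at this
    linarith [hosc t ht]
  have hconst : |φ u| * (v - u) ≤
      |∫ t in u..v, ψ t| + ((∫ t in u..v, |ψ t - φ t|) + η * (v - u)) := by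
    have hsplit : φ u * (v - u) = (∫ t in u..v, ψ t) + ∫ t in u..v, (φ u - ψ t) := by
      rw [intervalIntegral.integral_sub intervalIntegrable_const hψ,
        intervalIntegral.integral_const, smul_eq_mul]
      ring
    calc |φ u| * (v - u) = |φ u * (v - u)| := by rw [abs_mul, abs_of_nonneg (sub_nonneg.mpr huv)]
      _ ≤ |∫ t in u..v, ψ t| + |∫ t in u..v, (φ u - ψ t)| := hsplit ▸ abs_add_le _ _
      _ ≤ |∫ t in u..v, ψ t| + ∫ t in u..v, (|ψ t - φ t| + η) := by
        gcongr
        refine (intervalIntegral.abs_integral_le_integral_abs huv).trans <|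
          intervalIntegral.integral_mono_on huv (intervalIntegrable_const.sub hψ).abs
            (hdiff.add intervalIntegrable_const) fun t ht => ?_
        linarith [abs_sub_le (φ u) (φ t) (ψ t), abs_sub_comm (φ u) (φ t),
          abs_sub_comm (φ t) (ψ t), hosc t ht]
      _ = _ := by rw [hbound]
  linarith [add_mul |φ u| η (v - u), mul_assoc 2 η (v - u)]

lemma IntervalIntegrable.exists_continuous_integral_abs_sub_le {ψ : ℝ → ℝ} {c d ε : ℝ}
    (hcd : c ≤ d) (hψ : IntervalIntegrable ψ volume c d) (hε : 0 < ε) :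
    ∃ φ : ℝ → ℝ, Continuous φ ∧ ∫ t in c..d, |ψ t - φ t| ≤ ε := by
  have hψ' : Integrable ψ (volume.restrict (Ioc c d)) :=
    (intervalIntegrable_iff_integrableOn_Ioc_of_le hcd).mp hψ
  obtain ⟨φ, -, hφ, hφc, -⟩ := hψ'.exists_hasCompactSupport_integral_sub_le hε
  exact ⟨φ, hφc, by rwa [intervalIntegral.integral_of_le hcd]⟩

lemma IntervalIntegrable.exists_partition_integral_abs_le {ψ : ℝ → ℝ} {c d ε : ℝ}
    (hcd : c ≤ d) (hψ : IntervalIntegrable ψ volume c d) (hε : 0 < ε) :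
    ∃ (n : ℕ) (s : ℕ → ℝ), Monotone s ∧ s 0 = c ∧ s n = d ∧
      ∫ t in c..d, |ψ t| ≤ ∑ j ∈ Finset.range n, |∫ t in s j..s (j + 1), ψ t| + ε := by
  obtain ⟨φ, hφ, hψφ⟩ := hψ.exists_continuous_integral_abs_sub_le hcd (by positivity : 0 < ε / 4)
  set η := ε / (4 * (d - c + 1))
  have hη : 0 < η := div_pos hε (by linarith)
  have hηdc : 2 * η * (d - c) ≤ ε / 2 := by
    have h : η * (4 * (d - c + 1)) = ε := div_mul_cancel₀ _ (by linarith)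
    have : 2 * η * (d - c) = ε / 2 - 2 * η := by rw [← h]; ring
    linarith
  obtain ⟨δ, hδ, hφδ⟩ := Metric.uniformContinuousOn_iff.mp
    (isCompact_Icc.uniformContinuousOn_of_continuous hφ.continuousOn) η hη
  obtain ⟨n, s, hs, hs0, hsn, hmesh⟩ := exists_partition_mesh_lt hcd hδ
  refine ⟨n, s, hs, hs0, hsn, ?_⟩
  have hmem : ∀ j ≤ n, s j ∈ Icc c d := fun j hj => hs0 ▸ hsn ▸ ⟨hs j.zero_le, hs hj⟩
  have hpiece : ∀ {χ : ℝ → ℝ}, IntervalIntegrable χ volume c d →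
      ∀ j < n, IntervalIntegrable χ volume (s j) (s (j + 1)) := fun hχ j hj =>
    hχ.of_mem_Icc (hmem j hj.le) (hmem (j + 1) hj)
  have hsum : ∀ {χ : ℝ → ℝ}, IntervalIntegrable χ volume c d →
      ∑ j ∈ Finset.range n, ∫ t in s j..s (j + 1), χ t = ∫ t in c..d, χ t := fun hχ => by
    rw [intervalIntegral.sum_integral_adjacent_intervals (hpiece hχ), hs0, hsn]
  have hφcd : IntervalIntegrable φ volume c d := hφ.intervalIntegrable c d
  have hlocal : ∀ j < n, ∫ t in s j..s (j + 1), |ψ t| ≤ |∫ t in s j..s (j + 1), ψ t| +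
      2 * (∫ t in s j..s (j + 1), |ψ t - φ t|) + 2 * η * (s (j + 1) - s j) := fun j hj =>
    integral_abs_le_abs_integral_add (hs j.le_succ) (hpiece hψ j hj) (hpiece hφcd j hj)
      fun t ht => by
        have htmem : t ∈ Icc c d := ⟨(hmem j hj.le).1.trans ht.1, ht.2.trans (hmem (j + 1) hj).2⟩
        refine (hφδ t htmem (s j) (hmem j hj.le) ?_).le
        rw [Real.dist_eq, abs_of_nonneg (sub_nonneg.mpr ht.1)]
        linarith [hmesh j, ht.2]
  have htotal := Finset.sum_le_sum fun j hj => hlocal j (Finset.mem_range.mp hj)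
  rw [Finset.sum_add_distrib, Finset.sum_add_distrib, ← Finset.mul_sum, ← Finset.mul_sum,
    Finset.sum_range_sub s, hs0, hsn, hsum hψ.abs, hsum (hψ.sub hφcd).abs] at htotal
  linarith

lemma exists_sum_shift_le_integral {φ : ℝ → ℝ} {a b η : ℝ} (hφ : IntervalIntegrable φ volume a b)
    (hφ0 : 0 ≤ φ) (hη : 0 < η) {m : ℕ} {p : ℕ → ℝ} (hp : ∀ j < m, a ≤ p j ∧ p j + η ≤ b) :
    ∃ w ∈ Ioo 0 η, ∑ j ∈ Finset.range m, φ (p j + w) ≤ m / η * ∫ t in a..b, φ t := by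
  have hshift : ∀ j ∈ Finset.range m, IntervalIntegrable (fun w => φ (p j + w)) volume 0 η := by
    intro j hj
    obtain ⟨hpa, hpb⟩ := hp j (Finset.mem_range.mp hj)
    have := (hφ.of_mem_Icc ⟨hpa, by linarith⟩ ⟨by linarith, hpb⟩).comp_add_right (p j)
    simpa [add_comm] using this
  have hint : IntegrableOn (fun w => ∑ j ∈ Finset.range m, φ (p j + w)) (Ioo 0 η) :=
    (intervalIntegrable_iff_integrableOn_Ioo_of_le hη.le).mp
      (by simpa only [Finset.sum_fn] using IntervalIntegrable.sum _ hshift)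
  obtain ⟨w, hw, hle⟩ := exists_le_setAverage (by simp [hη]) (by simp) hint
  refine ⟨w, hw, hle.trans ?_⟩
  rw [setAverage_eq, measureReal_def, Real.volume_Ioo, sub_zero, ENNReal.toReal_ofReal hη.le,
    smul_eq_mul, ← integral_Ioc_eq_integral_Ioo, ← intervalIntegral.integral_of_le hη.le,
    intervalIntegral.integral_finsetSum hshift, div_eq_inv_mul, mul_assoc]
  gcongr
  calc ∑ j ∈ Finset.range m, ∫ w in (0)..η, φ (p j + w)
      ≤ ∑ j ∈ Finset.range m, ∫ t in a..b, φ t := Finset.sum_le_sum fun j hj => by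
        obtain ⟨hpa, hpb⟩ := hp j (Finset.mem_range.mp hj)
        simp_rw [add_comm (p j)]
        rw [intervalIntegral.integral_comp_add_right, zero_add, add_comm η]
        exact intervalIntegral.integral_mono_interval hpa (by linarith) hpb
          (Eventually.of_forall hφ0) hφ
    _ = m * ∫ t in a..b, φ t := by rw [Finset.sum_const, Finset.card_range, nsmul_eq_mul]

/-- `F` is the continuous representative on `[a, b]` of a `W^{1,1}((a, b))` function with weak
derivative `F'`. -/
structure IsPrimitiveOn (F F' : ℝ → ℝ) (a b : ℝ) : Prop where
  intervalIntegrable : IntervalIntegrable F' volume a b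
  sub_eq_integral : ∀ u ∈ Icc a b, ∀ v ∈ Icc a b, F v - F u = ∫ t in u..v, F' t

namespace IsPrimitiveOn

variable {F F' : ℝ → ℝ} {a b : ℝ}

lemma of_eq_add_integral (hF' : IntervalIntegrable F' volume a b)
    (hF : ∀ x ∈ Icc a b, F x = F a + ∫ t in a..x, F' t) : IsPrimitiveOn F F' a b := by
  refine ⟨hF', fun u hu v hv => ?_⟩
  have ha : a ∈ Icc a b := ⟨le_rfl, hu.1.trans hu.2⟩
  rw [hF u hu, hF v hv, add_sub_add_left_eq_sub,
    intervalIntegral.integral_interval_sub_left (hF'.of_mem_Icc ha hv) (hF'.of_mem_Icc ha hu)]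

lemma continuousOn (hF : IsPrimitiveOn F F' a b) : ContinuousOn F (Icc a b) := by
  rcases (Icc a b).eq_empty_or_nonempty with h | ⟨x, hx⟩
  · simp [h]
  have ha : a ∈ Icc a b := ⟨le_rfl, hx.1.trans hx.2⟩
  have hprim := (intervalIntegral.continuousOn_primitive_interval' hF.intervalIntegrable
    left_mem_uIcc).mono Icc_subset_uIcc
  refine ((continuousOn_const (c := F a)).add hprim).congr fun y hy => ?_
  simp only [Pi.add_apply, ← hF.sub_eq_integral a ha y hy, add_sub_cancel]

lemma abs_sub_le_integral_abs (hF : IsPrimitiveOn F F' a b) {u v y z : ℝ} (hau : a ≤ u)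
    (hvb : v ≤ b) (hy : y ∈ Icc u v) (hz : z ∈ Icc u v) : |F y - F z| ≤ ∫ t in u..v, |F' t| := by
  have huv : u ≤ v := hy.1.trans hy.2
  have hsub : Icc u v ⊆ Icc a b := Icc_subset_Icc hau hvb
  have hint : IntervalIntegrable (fun t => |F' t|) volume u v :=
    hF.intervalIntegrable.abs.of_mem_Icc (hsub ⟨le_rfl, huv⟩) (hsub ⟨huv, le_rfl⟩)
  rw [hF.sub_eq_integral z (hsub hz) y (hsub hy)]
  calc |∫ t in z..y, F' t| ≤ |(∫ t in z..y, |F' t|)| :=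
        intervalIntegral.norm_integral_le_abs_integral_norm (f := F')
    _ ≤ |(∫ t in u..v, |F' t|)| := intervalIntegral.abs_integral_mono_interval
        (uIoc_subset_uIoc_of_uIcc_subset_uIcc (uIcc_subset_uIcc
          (Icc_subset_uIcc hz) (Icc_subset_uIcc hy)))
        (Eventually.of_forall fun t => abs_nonneg _) hint
    _ = ∫ t in u..v, |F' t| :=
        abs_of_nonneg (intervalIntegral.integral_nonneg huv fun t _ => abs_nonneg _)

lemma sum_abs_sub_le (hF : IsPrimitiveOn F F' a b) (G : ℝ → ℝ) {s : ℕ → ℝ} {n : ℕ} {w : ℝ}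
    (hs : Monotone s) (ha : a ≤ s 0) (hw : 0 ≤ w) (hb : s n + w ≤ b) :
    ∑ j ∈ Finset.range n, |G (s (j + 1)) - G (s j)| ≤
      (∫ t in s 0..s n + w, |F' t|) + 2 * ∑ j ∈ Finset.range (n + 1), |F (s j + w) - G (s j)| := by
  set e : ℕ → ℝ := fun j => |F (s j + w) - G (s j)|
  have hmem : ∀ j ≤ n, s j + w ∈ Icc a b := fun j hj =>
    ⟨by linarith [hs j.zero_le], by linarith [hs hj]⟩
  have hterm : ∀ j < n, |G (s (j + 1)) - G (s j)| ≤
      (∫ t in s j + w..s (j + 1) + w, |F' t|) + (e (j + 1) + e j) := fun j hj => by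
    have hF1 := hF.abs_sub_le_integral_abs (hmem j hj.le).1 (hmem (j + 1) hj).2
      (y := s (j + 1) + w) (z := s j + w) ⟨by linarith [hs j.le_succ], le_rfl⟩
      ⟨le_rfl, by linarith [hs j.le_succ]⟩
    have := abs_add_three (F (s (j + 1) + w) - F (s j + w)) (-(F (s (j + 1) + w) - G (s (j + 1))))
      (F (s j + w) - G (s j))
    rw [abs_neg, show ∀ x y z : ℝ, x - y + -(x - z) + (y - G (s j)) = z - G (s j) by
      intros; ring] at this
    linarith
  have hint : ∑ j ∈ Finset.range n, ∫ t in s j + w..s (j + 1) + w, |F' t| ≤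
      ∫ t in s 0..s n + w, |F' t| := by
    rw [intervalIntegral.sum_integral_adjacent_intervals (a := fun j => s j + w)
      fun j hj => hF.intervalIntegrable.abs.of_mem_Icc (hmem j hj.le) (hmem (j + 1) hj)]
    exact intervalIntegral.integral_mono_interval (le_add_of_nonneg_right hw)
      (by linarith [hs n.zero_le]) le_rfl (Eventually.of_forall fun t => abs_nonneg _)
      (hF.intervalIntegrable.abs.of_mem_Icc ⟨ha, by linarith [hs n.zero_le]⟩ (hmem n le_rfl))
  have hends : ∑ j ∈ Finset.range n, (e (j + 1) + e j) ≤ 2 * ∑ j ∈ Finset.range (n + 1), e j := by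
    have h1 := Finset.sum_range_succ' e n
    have h2 := Finset.sum_range_succ e n
    rw [Finset.sum_add_distrib]
    linarith [abs_nonneg (F (s 0 + w) - G (s 0)), abs_nonneg (F (s n + w) - G (s n))]
  have := Finset.sum_le_sum fun j hj => hterm j (Finset.mem_range.mp hj)
  rw [Finset.sum_add_distrib] at this
  linarith

lemma sum_abs_sub_le_integral_abs_add (hF : IsPrimitiveOn F F' a b) {G : ℝ → ℝ}
    (hG : ContinuousOn G (Icc a b)) {s : ℕ → ℝ} {n : ℕ} {η θ : ℝ} (hs : Monotone s)
    (ha : a ≤ s 0) (hη : 0 < η) (hb : s n + η ≤ b)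
    (hosc : ∀ w ∈ Ioo 0 η, ∀ j ≤ n, |G (s j + w) - G (s j)| ≤ θ) :
    ∑ j ∈ Finset.range n, |G (s (j + 1)) - G (s j)| ≤ (∫ t in s 0..s n + η, |F' t|) +
      2 * ((n + 1) / η * ∫ t in a..b, |F t - G t|) + 2 * ((n + 1) * θ) := by
  have hsn : s 0 ≤ s n := hs n.zero_le
  have hFG : IntervalIntegrable (fun t => |F t - G t|) volume a b :=
    (hF.continuousOn.sub hG).abs.intervalIntegrable_of_Icc (by linarith)
  obtain ⟨w, hw, hwavg⟩ := exists_sum_shift_le_integral hFG (fun _ => abs_nonneg _) hη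
    (m := n + 1) (p := s) fun j hj => ⟨ha.trans (hs j.zero_le),
      by linarith [hs (Nat.lt_succ_iff.mp hj)]⟩
  push_cast at hwavg
  have hshift : ∑ j ∈ Finset.range (n + 1), |F (s j + w) - G (s j)| ≤
      ∑ j ∈ Finset.range (n + 1), |F (s j + w) - G (s j + w)| + (n + 1) * θ := by
    calc ∑ j ∈ Finset.range (n + 1), |F (s j + w) - G (s j)|
        ≤ ∑ j ∈ Finset.range (n + 1), (|F (s j + w) - G (s j + w)| + θ) :=
          Finset.sum_le_sum fun j hj => by
            linarith [abs_sub_le (F (s j + w)) (G (s j + w)) (G (s j)),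
              hosc w hw j (Nat.lt_succ_iff.mp (Finset.mem_range.mp hj))]
      _ = _ := by
        rw [Finset.sum_add_distrib, Finset.sum_const, Finset.card_range, nsmul_eq_mul]
        push_cast
        ring
  have hmono : ∫ t in s 0..s n + w, |F' t| ≤ ∫ t in s 0..s n + η, |F' t| :=
    intervalIntegral.integral_mono_interval le_rfl (by linarith [hw.1]) (by linarith [hw.2])
      (Eventually.of_forall fun t => abs_nonneg _)
      (hF.intervalIntegrable.abs.of_mem_Icc ⟨ha, by linarith⟩ ⟨by linarith, hb⟩)
  linarith [hF.sum_abs_sub_le G hs ha hw.1.le (by linarith [hw.2])]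

lemma abs_sub_le_average_add {G G' : ℝ → ℝ} (hF : IsPrimitiveOn F F' a b)
    (hG : IsPrimitiveOn G G' a b) {u v y : ℝ} (hau : a ≤ u) (huv : u < v) (hvb : v ≤ b)
    (hy : y ∈ Icc u v) :
    |F y - G y| ≤ (v - u)⁻¹ * (∫ t in a..b, |F t - G t|) + (∫ t in u..v, |F' t|) +
      ∫ t in u..v, |G' t| := by
  have hFG : IntervalIntegrable (fun t => |F t - G t|) volume a b :=
    (hF.continuousOn.sub hG.continuousOn).abs.intervalIntegrable_of_Icc (by linarith)
  obtain ⟨z, hz, hzavg⟩ := exists_sum_shift_le_integral hFG (fun t => abs_nonneg _)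
    (sub_pos.mpr huv) (m := 1) (p := fun _ => u)
    fun _ _ => ⟨hau, by linarith⟩
  simp only [Finset.range_one, Finset.sum_singleton, Nat.cast_one, one_div] at hzavg
  have hzJ : u + z ∈ Icc u v := ⟨by linarith [hz.1], by linarith [hz.2]⟩
  have := abs_add_three (F y - F (u + z)) (F (u + z) - G (u + z)) (G (u + z) - G y)
  rw [show ∀ p q r : ℝ, F y - p + (p - q) + (q - r) = F y - r by intros; ring,
    abs_sub_comm (G (u + z))] at this
  linarith [hF.abs_sub_le_integral_abs hau hvb hy hzJ, hG.abs_sub_le_integral_abs hau hvb hy hzJ]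

end IsPrimitiveOn

section StrictConvergence

variable {f f' : ℕ → ℝ → ℝ} {g g' : ℝ → ℝ} {a b : ℝ}

theorem eventually_integral_abs_sub_lt_integral_abs_enlarged
    (hf : ∀ k, IsPrimitiveOn (f k) (f' k) a b) (hg : IsPrimitiveOn g g' a b)
    (hL1 : Tendsto (fun k => ∫ x in a..b, |f k x - g x|) atTop (𝓝 0))
    {c d η ε : ℝ} (hac : a ≤ c) (hcd : c ≤ d) (hη : 0 < η) (hdb : d + η ≤ b) (hε : 0 < ε) :
    ∀ᶠ k in atTop, (∫ t in c..d, |g' t|) - ε < ∫ t in c..d + η, |f' k t| := by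
  have hg'cd : IntervalIntegrable g' volume c d :=
    hg.intervalIntegrable.of_mem_Icc ⟨hac, by linarith⟩ ⟨by linarith, by linarith⟩
  obtain ⟨n, s, hs, hs0, hsn, happrox⟩ :=
    hg'cd.exists_partition_integral_abs_le hcd (by positivity : 0 < ε / 4)
  have hmem : ∀ j ≤ n, s j ∈ Icc a b := fun j hj =>
    ⟨hac.trans (hs0 ▸ hs j.zero_le), (hsn ▸ hs hj).trans (by linarith)⟩
  have hgsum : ∑ j ∈ Finset.range n, |∫ t in s j..s (j + 1), g' t| =
      ∑ j ∈ Finset.range n, |g (s (j + 1)) - g (s j)| :=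
    Finset.sum_congr rfl fun j hj => by
      rw [hg.sub_eq_integral _ (hmem j (Finset.mem_range.mp hj).le) _
        (hmem (j + 1) (Finset.mem_range.mp hj))]
  obtain ⟨δ, hδ, hsmall⟩ :=
    hg.intervalIntegrable.exists_pos_integral_abs_lt (by positivity : 0 < ε / (8 * (n + 1)))
  set η' := min η (δ / 2)
  have hη' : 0 < η' := lt_min hη (half_pos hδ)
  have hη'η : η' ≤ η := min_le_left _ _
  have hη'δ : η' < δ := (min_le_right _ _).trans_lt (half_lt_self hδ)
  have hgshift : ∀ w ∈ Ioo 0 η', ∀ j ≤ n, |g (s j + w) - g (s j)| ≤ ε / (8 * (n + 1)) := by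
    intro w hw j hj
    have hsj : s j ≤ d := hsn ▸ hs hj
    refine (hg.abs_sub_le_integral_abs (hmem j hj).1 (by linarith [hw.2])
      ⟨by linarith [hw.1], le_rfl⟩ ⟨le_rfl, by linarith [hw.1]⟩).trans
      (hsmall _ _ (hmem j hj).1 (by linarith [hw.1]) (by linarith [hw.2]) (by linarith [hw.2])).le
  have hlim : ∀ᶠ k in atTop, 2 * ((n + 1) / η' * ∫ x in a..b, |f k x - g x|) < ε / 4 := by
    have : Tendsto (fun k => 2 * ((n + 1) / η' * ∫ x in a..b, |f k x - g x|)) atTop (𝓝 0) := by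
      simpa using (hL1.const_mul ((n + 1) / η')).const_mul 2
    exact this.eventually (eventually_lt_nhds (by positivity))
  have hθ : (n + 1) * (ε / (8 * (n + 1))) = ε / 8 := by field_simp
  filter_upwards [hlim] with k hk
  have hkey := (hf k).sum_abs_sub_le_integral_abs_add hg.continuousOn hs (hmem 0 n.zero_le).1 hη'
    (by linarith) hgshift
  have hmono : ∫ t in c..d + η', |f' k t| ≤ ∫ t in c..d + η, |f' k t| :=
    intervalIntegral.integral_mono_interval le_rfl (by linarith) (by linarith)
      (Eventually.of_forall fun t => abs_nonneg _)
      ((hf k).intervalIntegrable.abs.of_mem_Icc ⟨hac, by linarith⟩ ⟨by linarith, hdb⟩)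
  rw [hs0, hsn, ← hgsum, hθ] at hkey
  linarith

theorem eventually_integral_abs_sub_lt_integral_abs
    (hf : ∀ k, IsPrimitiveOn (f k) (f' k) a b) (hg : IsPrimitiveOn g g' a b)
    (hL1 : Tendsto (fun k => ∫ x in a..b, |f k x - g x|) atTop (𝓝 0))
    {c d ε : ℝ} (hac : a ≤ c) (hcd : c ≤ d) (hdb : d ≤ b) (hε : 0 < ε) :
    ∀ᶠ k in atTop, (∫ t in c..d, |g' t|) - ε < ∫ t in c..d, |f' k t| := by
  rcases hcd.eq_or_lt with rfl | hcd
  · exact Eventually.of_forall fun _ => by simpa using hε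
  obtain ⟨δ, hδ, hsmall⟩ := hg.intervalIntegrable.exists_pos_integral_abs_lt (half_pos hε)
  set d' := max c (d - δ / 2)
  have hcd' : c ≤ d' := le_max_left _ _
  have hd'd : d' < d := max_lt hcd (by linarith)
  have htail : ∫ t in d'..d, |g' t| < ε / 2 :=
    hsmall d' d (hac.trans hcd') hd'd.le hdb (by linarith [le_max_right c (d - δ / 2)])
  have hsplit : (∫ t in c..d', |g' t|) + ∫ t in d'..d, |g' t| = ∫ t in c..d, |g' t| :=
    intervalIntegral.integral_add_adjacent_intervals
      (hg.intervalIntegrable.abs.of_mem_Icc ⟨hac, by linarith⟩ ⟨by linarith, by linarith⟩)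
      (hg.intervalIntegrable.abs.of_mem_Icc ⟨by linarith, by linarith⟩ ⟨by linarith, hdb⟩)
  filter_upwards [eventually_integral_abs_sub_lt_integral_abs_enlarged hf hg hL1 hac hcd'
    (sub_pos.mpr hd'd) (by linarith) (half_pos hε)] with k hk
  rw [add_sub_cancel] at hk
  linarith

theorem eventually_integral_abs_lt_integral_abs_add
    (hf : ∀ k, IsPrimitiveOn (f k) (f' k) a b) (hg : IsPrimitiveOn g g' a b)
    (hL1 : Tendsto (fun k => ∫ x in a..b, |f k x - g x|) atTop (𝓝 0))
    (hTV : Tendsto (fun k => ∫ x in a..b, |f' k x|) atTop (𝓝 (∫ x in a..b, |g' x|)))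
    {u v ε : ℝ} (hau : a ≤ u) (huv : u ≤ v) (hvb : v ≤ b) (hε : 0 < ε) :
    ∀ᶠ k in atTop, ∫ t in u..v, |f' k t| < (∫ t in u..v, |g' t|) + ε := by
  have hsplit : ∀ {ψ : ℝ → ℝ}, IntervalIntegrable ψ volume a b → ∫ t in a..b, |ψ t| =
      (∫ t in a..u, |ψ t|) + (∫ t in u..v, |ψ t|) + ∫ t in v..b, |ψ t| := fun {ψ} hψ => by
    have ha : a ∈ Icc a b := ⟨le_rfl, by linarith⟩
    have hu : u ∈ Icc a b := ⟨hau, by linarith⟩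
    have hv : v ∈ Icc a b := ⟨by linarith, hvb⟩
    rw [intervalIntegral.integral_add_adjacent_intervals (hψ.abs.of_mem_Icc ha hu)
        (hψ.abs.of_mem_Icc hu hv),
      intervalIntegral.integral_add_adjacent_intervals (hψ.abs.of_mem_Icc ha hv)
        (hψ.abs.of_mem_Icc hv ⟨by linarith, le_rfl⟩)]
  filter_upwards [eventually_integral_abs_sub_lt_integral_abs hf hg hL1 le_rfl hau (by linarith)
      (by positivity : 0 < ε / 3),
    eventually_integral_abs_sub_lt_integral_abs hf hg hL1 (by linarith) hvb le_rfl
      (by positivity : 0 < ε / 3),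
    hTV.eventually (eventually_lt_nhds (lt_add_of_pos_right _ (by positivity : 0 < ε / 3)))]
    with k h1 h2 h3
  rw [hsplit (hf k).intervalIntegrable, hsplit hg.intervalIntegrable] at h3
  linarith

theorem tendstoUniformlyOn_Icc_of_tendsto_integral_abs (hab : a < b)
    (hf : ∀ k, IsPrimitiveOn (f k) (f' k) a b) (hg : IsPrimitiveOn g g' a b)
    (hL1 : Tendsto (fun k => ∫ x in a..b, |f k x - g x|) atTop (𝓝 0))
    (hTV : Tendsto (fun k => ∫ x in a..b, |f' k x|) atTop (𝓝 (∫ x in a..b, |g' x|))) :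
    TendstoUniformlyOn f g atTop (Icc a b) := by
  rw [← tendstoLocallyUniformlyOn_iff_tendstoUniformlyOn_of_compact isCompact_Icc,
    Metric.tendstoLocallyUniformlyOn_iff]
  intro ε hε x hx
  obtain ⟨δ, hδ, hsmall⟩ :=
    hg.intervalIntegrable.exists_pos_integral_abs_lt (by positivity : 0 < ε / 4)
  set u := max a (x - δ / 4)
  set v := min b (x + δ / 4)
  have hau : a ≤ u := le_max_left _ _
  have hvb : v ≤ b := min_le_left _ _
  have huv : u < v :=
    max_lt (lt_min hab (by linarith [hx.1])) (lt_min (by linarith [hx.2]) (by linarith))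
  have hgJ : ∫ t in u..v, |g' t| < ε / 4 := hsmall u v hau huv.le hvb
    (by linarith [le_max_right a (x - δ / 4), min_le_right b (x + δ / 4)])
  have hJ : Icc u v ∈ 𝓝[Icc a b] x :=
    mem_nhdsWithin.mpr ⟨Ioo (x - δ / 4) (x + δ / 4), isOpen_Ioo, ⟨by linarith, by linarith⟩,
      fun y ⟨⟨hy₁, hy₂⟩, hy⟩ => ⟨max_le hy.1 hy₁.le, le_min hy.2 hy₂.le⟩⟩
  refine ⟨Icc u v, hJ, ?_⟩
  filter_upwards [eventually_integral_abs_lt_integral_abs_add hf hg hL1 hTV hau huv.le hvb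
      (by positivity : 0 < ε / 4),
    hL1.eventually (eventually_lt_nhds
      (mul_pos (sub_pos.mpr huv) (by positivity) : (0 : ℝ) < (v - u) * (ε / 4)))]
    with k hfJ hfg y hy
  have hL1J : (v - u)⁻¹ * ∫ t in a..b, |f k t - g t| < ε / 4 := by
    rwa [inv_mul_lt_iff₀ (sub_pos.mpr huv)]
  rw [Real.dist_eq, abs_sub_comm]
  linarith [(hf k).abs_sub_le_average_add hg hau huv hvb hy]

end StrictConvergence

theorem stmt5 (a b : ℝ) (hab : a < b) (f : ℕ → ℝ → ℝ) (f' : ℕ → ℝ → ℝ)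
    (g : ℝ → ℝ) (g' : ℝ → ℝ)
    (hfint : ∀ k, IntegrableOn (f' k) (Set.Ioo a b))
    (hfrep : ∀ k, ∀ x ∈ Set.Icc a b, f k x = f k a + ∫ t in a..x, f' k t)
    (hgint : IntegrableOn g' (Set.Ioo a b))
    (hgrep : ∀ x ∈ Set.Icc a b, g x = g a + ∫ t in a..x, g' t)
    (hL1 : Tendsto (fun k => ∫ x in Set.Ioo a b, |f k x - g x|) atTop (nhds 0))
    (hTV : Tendsto (fun k => ∫ x in Set.Ioo a b, |f' k x|) atTop
      (nhds (∫ x in Set.Ioo a b, |g' x|))) :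
    TendstoUniformlyOn f g atTop (Set.Ioo a b) := by
  have hf : ∀ k, IsPrimitiveOn (f k) (f' k) a b := fun k => .of_eq_add_integral
    ((intervalIntegrable_iff_integrableOn_Ioo_of_le hab.le).mpr (hfint k)) (hfrep k)
  have hg : IsPrimitiveOn g g' a b := .of_eq_add_integral
    ((intervalIntegrable_iff_integrableOn_Ioo_of_le hab.le).mpr hgint) hgrep
  simp only [← integral_Ioc_eq_integral_Ioo, ← intervalIntegral.integral_of_le hab.le] at hL1 hTV
  exact (tendstoUniformlyOn_Icc_of_tendsto_integral_abs hab hf hg hL1 hTV).mono Ioo_subset_Icc_self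
end
end

section
/- Let (a,b) ⊂ ℝ be a bounded interval and let f_k, f ∈ W^{1,1}((a,b)). If f_k → f in L¹((a,b)) and ∫_a^b |f_k'(x)| dx → ∫_a^b |f'(x)| dx, then for every open subinterval (c,d) ⊆ (a,b) one has lim_{k→∞} ∫_c^d |f_k'(x)| dx = ∫_c^d |f'(x)| dx. -/
/-!
Lower semicontinuity of `u ↦ ∫_p^q |u'|` under L¹ convergence, applied to the three pieces
`(a,c)`, `(c,e)`, `(e,b)`, together with convergence of the total integral over `(a,b)`, forces
convergence on each piece. Lower semicontinuity comes from difference quotients: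
`∫_c^{e-h} |u(x+h) - u(x)| ≤ h ∫_c^e |u'|`, the left side is L¹-continuous in `u` for fixed `h`,
and by Lebesgue differentiation and Fatou's lemma
`∫_c^e |u'| ≤ liminf_{h → 0+} h⁻¹ ∫_c^{e-h} |u(x+h) - u(x)|`.
-/

open MeasureTheory Filter Set Topology intervalIntegral

section Filter

variable {ι : Type*} {l : Filter ι} {x y : ι → ℝ} {a b : ℝ}

theorem eventually_lt_add_of_forall_lt_eventually_lt
    (hx : ∀ r < a, ∀ᶠ i in l, r < x i) (hy : ∀ r < b, ∀ᶠ i in l, r < y i) :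
    ∀ r < a + b, ∀ᶠ i in l, r < x i + y i := by
  intro r hr
  filter_upwards [hx (a - (a + b - r) / 2) (by linarith),
    hy (b - (a + b - r) / 2) (by linarith)] with i hxi hyi
  linarith

theorem tendsto_of_tendsto_add_of_forall_lt_eventually_lt
    (hx : ∀ r < a, ∀ᶠ i in l, r < x i) (hy : ∀ r < b, ∀ᶠ i in l, r < y i)
    (hxy : Tendsto (fun i => x i + y i) l (𝓝 (a + b))) : Tendsto x l (𝓝 a) := by
  refine tendsto_order.2 ⟨hx, fun r hr => ?_⟩
  filter_upwards [hy (b - (r - a) / 2) (by linarith),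
    (tendsto_order.1 hxy).2 (a + b + (r - a) / 2) (by linarith)] with i hyi hxyi
  linarith

end Filter

section Primitive

variable {u u' : ℝ → ℝ} {a b c e : ℝ}

theorem IntervalIntegrable.mono_set_Icc {μ : Measure ℝ} (hu : IntervalIntegrable u μ c e)
    {x y : ℝ} (hx : x ∈ Icc c e) (hy : y ∈ Icc c e) : IntervalIntegrable u μ x y :=
  hu.mono_set (uIcc_subset_uIcc (Icc_subset_uIcc hx) (Icc_subset_uIcc hy))

theorem IntervalIntegrable.comp_add_right_of_le (hu : IntervalIntegrable u volume c e)
    {h : ℝ} (hh : 0 ≤ h) (hche : c + h ≤ e) :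
    IntervalIntegrable (fun x => u (x + h)) volume c (e - h) :=
  (hu.comp_add_right h).mono_set (uIcc_subset_uIcc (by grind [uIcc]) (by grind [uIcc]))

theorem integral_Ioo_eq_intervalIntegral (f : ℝ → ℝ) (hce : c ≤ e) :
    ∫ x in Ioo c e, f x = ∫ x in c..e, f x := by
  rw [integral_of_le hce, integral_Ioc_eq_integral_Ioo]

theorem eq_add_integral_of_Icc_subset (hu' : IntervalIntegrable u' volume a b)
    (hu : ∀ x ∈ Icc a b, u x = u a + ∫ t in a..x, u' t) (hac : a ≤ c) (hce : c ≤ e)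
    (heb : e ≤ b) : ∀ x ∈ Icc c e, u x = u c + ∫ t in c..x, u' t := by
  intro x hx
  have hc : c ∈ Icc a b := ⟨hac, hce.trans heb⟩
  have hx' : x ∈ Icc a b := ⟨hac.trans hx.1, hx.2.trans heb⟩
  rw [hu x hx', hu c hc, add_assoc, integral_add_adjacent_intervals
    (hu'.mono_set_Icc (left_mem_Icc.2 (hac.trans (hce.trans heb))) hc) (hu'.mono_set_Icc hc hx')]

theorem continuousOn_of_eq_add_integral (hu' : IntervalIntegrable u' volume c e)
    (hu : ∀ x ∈ Icc c e, u x = u c + ∫ t in c..x, u' t) (hce : c ≤ e) :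
    ContinuousOn u (Icc c e) := by
  have hP := continuousOn_primitive_interval' hu' left_mem_uIcc
  rw [uIcc_of_le hce] at hP
  exact (continuousOn_const.add hP).congr hu

theorem intervalIntegrable_of_eq_add_integral (hu' : IntervalIntegrable u' volume c e)
    (hu : ∀ x ∈ Icc c e, u x = u c + ∫ t in c..x, u' t) (hce : c ≤ e) :
    IntervalIntegrable u volume c e :=
  (continuousOn_of_eq_add_integral hu' hu hce).intervalIntegrable_of_Icc hce

theorem integral_abs_sub_shift_le (hu' : IntervalIntegrable u' volume c e)
    (hu : ∀ x ∈ Icc c e, u x = u c + ∫ t in c..x, u' t) {h : ℝ} (hh : 0 < h)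
    (hche : c + h ≤ e) :
    ∫ x in c..e - h, |u (x + h) - u x| ≤ h * ∫ x in c..e, |u' x| := by
  set F := fun y => ∫ t in c..y, |u' t|
  have hsub : ∀ x ∈ Icc c e, ∀ y ∈ Icc c e, ∫ t in x..y, |u' t| = F y - F x := fun x hx y hy =>
    (integral_interval_sub_left (hu'.abs.mono_set_Icc (left_mem_Icc.2 (hx.1.trans hx.2)) hy)
      (hu'.abs.mono_set_Icc (left_mem_Icc.2 (hx.1.trans hx.2)) hx)).symm
  have hF : MonotoneOn F (Icc c (e - h + h)) := by
    rw [sub_add_cancel]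
    intro x hx y hy hxy
    linarith [hsub x hx y hy, integral_nonneg (μ := volume) hxy fun t _ => abs_nonneg (u' t)]
  have hpt : ∀ x ∈ Icc c (e - h), |u (x + h) - u x| ≤ h * slope F x (x + h) := by
    intro x hx
    have hx' : x ∈ Icc c e := ⟨hx.1, by linarith [hx.2]⟩
    have hxh : x + h ∈ Icc c e := ⟨by linarith [hx.1], by linarith [hx.2]⟩
    have hc : c ∈ Icc c e := left_mem_Icc.2 (by linarith)
    rw [slope_def_field, add_sub_cancel_left, mul_div_cancel₀ _ hh.ne', ← hsub x hx' _ hxh,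
      hu _ hxh, hu x hx', add_sub_add_left_eq_sub,
      integral_interval_sub_left (hu'.mono_set_Icc hc hxh) (hu'.mono_set_Icc hc hx')]
    exact abs_integral_le_integral_abs (by linarith)
  have hint := intervalIntegrable_of_eq_add_integral hu' hu (by linarith)
  calc ∫ x in c..e - h, |u (x + h) - u x|
      ≤ ∫ x in c..e - h, h * slope F x (x + h) :=
        integral_mono_on (by linarith) ((hint.comp_add_right_of_le hh.le hche).sub
          (hint.mono_set_Icc (left_mem_Icc.2 (by linarith)) ⟨by linarith, by linarith⟩)).abs
          ((hF.intervalIntegrable_slope (by linarith) hh.le).const_mul h) hpt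
    _ = h * ∫ x in c..e - h, slope F x (x + h) := integral_const_mul _ _
    _ ≤ h * (F (e - h + h) - F c) := by
        gcongr; exact hF.intervalIntegral_slope_le (by linarith) hh.le
    _ = h * ∫ x in c..e, |u' x| := by simp [F]

theorem integral_abs_sub_shift_le_add {v : ℝ → ℝ} (hu : IntervalIntegrable u volume c e)
    (hv : IntervalIntegrable v volume c e) {h : ℝ} (hh : 0 ≤ h) (hche : c + h ≤ e) :
    ∫ x in c..e - h, |v (x + h) - v x|
      ≤ (∫ x in c..e - h, |u (x + h) - u x|) + 2 * ∫ x in c..e, |u x - v x| := by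
  have hw : IntervalIntegrable (fun x => |u x - v x|) volume c e := (hu.sub hv).abs
  have hrestr : ∀ {w : ℝ → ℝ}, IntervalIntegrable w volume c e →
      IntervalIntegrable w volume c (e - h) := fun hw =>
    hw.mono_set_Icc (left_mem_Icc.2 (by linarith)) ⟨by linarith, by linarith⟩
  have hdiff : ∀ {w : ℝ → ℝ}, IntervalIntegrable w volume c e →
      IntervalIntegrable (fun x => |w (x + h) - w x|) volume c (e - h) := fun hw =>
    ((hw.comp_add_right_of_le hh hche).sub (hrestr hw)).abs
  have hw_shift : IntervalIntegrable (fun x => |u (x + h) - v (x + h)|) volume c (e - h) :=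
    hw.comp_add_right_of_le hh hche
  have hpt : ∀ x ∈ Icc c (e - h), |v (x + h) - v x|
      ≤ |u (x + h) - u x| + |u (x + h) - v (x + h)| + |u x - v x| := fun x _ =>
    calc |v (x + h) - v x|
        = |(u (x + h) - u x) + (v (x + h) - u (x + h)) + (u x - v x)| := by ring_nf
      _ ≤ _ := abs_add_three _ _ _
      _ = _ := by rw [abs_sub_comm (v (x + h))]
  have hshift : ∫ x in c..e - h, |u (x + h) - v (x + h)| ≤ ∫ x in c..e, |u x - v x| := by
    rw [integral_comp_add_right (fun x => |u x - v x|), sub_add_cancel]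
    exact integral_mono_interval (by linarith) hche le_rfl
      (ae_of_all _ fun _ => abs_nonneg _) hw
  have hrest : ∫ x in c..e - h, |u x - v x| ≤ ∫ x in c..e, |u x - v x| :=
    integral_mono_interval le_rfl (by linarith) (by linarith)
      (ae_of_all _ fun _ => abs_nonneg _) hw
  calc ∫ x in c..e - h, |v (x + h) - v x|
      ≤ ∫ x in c..e - h, (|u (x + h) - u x| + |u (x + h) - v (x + h)| + |u x - v x|) :=
        integral_mono_on (by linarith) (hdiff hv)
          (((hdiff hu).add hw_shift).add (hrestr hw)) hpt
    _ = (∫ x in c..e - h, |u (x + h) - u x|) + (∫ x in c..e - h, |u (x + h) - v (x + h)|) +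
          ∫ x in c..e - h, |u x - v x| := by
        rw [intervalIntegral.integral_add ((hdiff hu).add hw_shift) (hrestr hw),
          intervalIntegral.integral_add (hdiff hu) hw_shift]
    _ ≤ _ := by linarith

theorem lintegral_enorm_le_liminf_lintegral_enorm_shift_quotient
    (hu' : IntervalIntegrable u' volume c e) (hu : ∀ x ∈ Icc c e, u x = u c + ∫ t in c..x, u' t)
    (hce : c ≤ e) {h : ℕ → ℝ} (hpos : ∀ n, 0 < h n) (hlim : Tendsto h atTop (𝓝 0)) :
    ∫⁻ x in Ioo c e, ‖u' x‖ₑ ≤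
      liminf (fun n => ∫⁻ x in Ioo c (e - h n), ‖(h n)⁻¹ * (u (x + h n) - u x)‖ₑ) atTop := by
  set G : ℕ → ℝ → ℝ := fun n =>
    (Ioo c (e - h n)).indicator fun x => (h n)⁻¹ * (u (x + h n) - u x)
  have hG_lim : ∀ᵐ x ∂volume.restrict (Ioo c e), Tendsto (fun n => G n x) atTop (𝓝 (u' x)) := by
    rw [ae_restrict_iff' measurableSet_Ioo]
    filter_upwards [hu'.ae_hasDerivAt_integral] with x hx hxce
    have hxce' : x ∈ uIcc c e := by rw [uIcc_of_le hce]; exact Ioo_subset_Icc_self hxce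
    have hh : Tendsto h atTop (𝓝[>] 0) :=
      tendsto_nhdsWithin_iff.2 ⟨hlim, Eventually.of_forall hpos⟩
    refine ((hx hxce' c left_mem_uIcc).tendsto_slope_zero_right.comp hh).congr' ?_
    filter_upwards [hlim.eventually (gt_mem_nhds (sub_pos.2 hxce.2))] with n hn
    have hxn : x ∈ Ioo c (e - h n) := ⟨hxce.1, by linarith⟩
    simp only [Function.comp, G, indicator_of_mem hxn, smul_eq_mul]
    rw [hu x (Ioo_subset_Icc_self hxce), hu (x + h n) ⟨by linarith [hpos n, hxce.1], by linarith⟩,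
      add_sub_add_left_eq_sub]
  have hucont := continuousOn_of_eq_add_integral hu' hu hce
  have hG_meas : ∀ n, AEMeasurable (fun x => ‖G n x‖ₑ) (volume.restrict (Ioo c e)) := fun n => by
    refine ((aemeasurable_indicator_iff measurableSet_Ioo).2
      (ContinuousOn.aemeasurable ?_ measurableSet_Ioo)).enorm
    refine continuousOn_const.mul ((hucont.comp (continuous_add_const _).continuousOn ?_).sub
      (hucont.mono ?_))
    · exact fun x hx => ⟨by linarith [hx.1, hpos n], by linarith [hx.2]⟩
    · exact fun x hx => ⟨hx.1.le, by linarith [hx.2, hpos n]⟩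
  calc ∫⁻ x in Ioo c e, ‖u' x‖ₑ ≤ liminf (fun n => ∫⁻ x in Ioo c e, ‖G n x‖ₑ) atTop :=
        lintegral_enorm_le_liminf_of_tendsto hG_lim hG_meas
    _ = _ := by
      congr 1; ext n
      simp only [G, enorm_indicator_eq_indicator_enorm]
      rw [lintegral_indicator measurableSet_Ioo, Measure.restrict_restrict measurableSet_Ioo,
        inter_eq_left.2 (Ioo_subset_Ioo_right (by linarith [hpos n]))]

theorem exists_mul_lt_integral_abs_sub_shift (hu' : IntervalIntegrable u' volume c e)
    (hu : ∀ x ∈ Icc c e, u x = u c + ∫ t in c..x, u' t) (hce : c < e) {r : ℝ}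
    (hr : r < ∫ x in c..e, |u' x|) :
    ∃ h > 0, c + h ≤ e ∧ h * r < ∫ x in c..e - h, |u (x + h) - u x| := by
  rcases lt_or_ge r 0 with hr0 | hr0
  · refine ⟨e - c, sub_pos.2 hce, by linarith, ?_⟩
    rw [sub_sub_cancel, integral_same]
    exact mul_neg_of_pos_of_neg (sub_pos.2 hce) hr0
  set h : ℕ → ℝ := fun n => 1 / ((n : ℝ) + 1)
  have hpos : ∀ n, 0 < h n := fun n => by positivity
  have hlim : Tendsto h atTop (𝓝 0) := tendsto_one_div_add_atTop_nhds_zero_nat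
  have hint := intervalIntegrable_of_eq_add_integral hu' hu hce.le
  have hlt : ENNReal.ofReal r < ∫⁻ x in Ioo c e, ‖u' x‖ₑ := by
    rw [← ofReal_integral_norm_eq_lintegral_enorm
      ((intervalIntegrable_iff_integrableOn_Ioo_of_le hce.le).1 hu'),
      ENNReal.ofReal_lt_ofReal_iff', integral_Ioo_eq_intervalIntegral _ hce.le]
    exact ⟨hr, hr0.trans_lt hr⟩
  obtain ⟨n, hn, hnle⟩ := ((eventually_lt_of_lt_liminf (hlt.trans_le
    (lintegral_enorm_le_liminf_lintegral_enorm_shift_quotient hu' hu hce.le hpos hlim))).and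
    (hlim.eventually (ge_mem_nhds (sub_pos.2 hce)))).exists
  have hI := ((hint.comp_add_right_of_le (hpos n).le (by linarith)).sub
    (hint.mono_set_Icc (left_mem_Icc.2 hce.le) ⟨by linarith, by linarith [hpos n]⟩)).const_mul
      (h n)⁻¹
  rw [intervalIntegrable_iff_integrableOn_Ioo_of_le (by linarith)] at hI
  rw [← ofReal_integral_norm_eq_lintegral_enorm hI, ENNReal.ofReal_lt_ofReal_iff',
    integral_Ioo_eq_intervalIntegral _ (by linarith)] at hn
  refine ⟨h n, hpos n, by linarith, ?_⟩
  simp only [Real.norm_eq_abs, abs_mul, abs_inv, abs_of_pos (hpos n),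
    intervalIntegral.integral_const_mul] at hn
  exact (lt_inv_mul_iff₀ (hpos n)).1 hn.1

theorem eventually_lt_integral_abs_deriv {f f' : ℕ → ℝ → ℝ} {g g' : ℝ → ℝ}
    (hf' : ∀ k, IntervalIntegrable (f' k) volume c e)
    (hf : ∀ k, ∀ x ∈ Icc c e, f k x = f k c + ∫ t in c..x, f' k t)
    (hg' : IntervalIntegrable g' volume c e) (hg : ∀ x ∈ Icc c e, g x = g c + ∫ t in c..x, g' t)
    (hL1 : Tendsto (fun k => ∫ x in c..e, |f k x - g x|) atTop (𝓝 0)) (hce : c ≤ e) :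
    ∀ r < ∫ x in c..e, |g' x|, ∀ᶠ k in atTop, r < ∫ x in c..e, |f' k x| := by
  intro r hr
  rcases hce.eq_or_lt with rfl | hce
  · simp only [integral_same] at hr ⊢
    exact Eventually.of_forall fun _ => hr
  obtain ⟨h, hh, hche, hgh⟩ :=
    exists_mul_lt_integral_abs_sub_shift hg' hg hce (add_div_two_lt_right.2 hr)
  filter_upwards [hL1.eventually (gt_mem_nhds (by nlinarith :
    0 < h * ((∫ x in c..e, |g' x|) - r) / 4))] with k hk
  have hshift := integral_abs_sub_shift_le_add
    (intervalIntegrable_of_eq_add_integral (hf' k) (hf k) hce.le)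
    (intervalIntegrable_of_eq_add_integral hg' hg hce.le) hh.le hche
  have hfk := integral_abs_sub_shift_le (hf' k) (hf k) hh hche
  have : h * r < h * ∫ x in c..e, |f' k x| := by linarith
  exact lt_of_mul_lt_mul_left this hh.le

theorem eventually_lt_integral_abs_deriv_of_Icc_subset {f f' : ℕ → ℝ → ℝ} {g g' : ℝ → ℝ}
    (hf' : ∀ k, IntervalIntegrable (f' k) volume a b)
    (hf : ∀ k, ∀ x ∈ Icc a b, f k x = f k a + ∫ t in a..x, f' k t)
    (hg' : IntervalIntegrable g' volume a b) (hg : ∀ x ∈ Icc a b, g x = g a + ∫ t in a..x, g' t)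
    (hL1 : Tendsto (fun k => ∫ x in a..b, |f k x - g x|) atTop (𝓝 0))
    (hac : a ≤ c) (hce : c ≤ e) (heb : e ≤ b) :
    ∀ r < ∫ x in c..e, |g' x|, ∀ᶠ k in atTop, r < ∫ x in c..e, |f' k x| := by
  have hab : a ≤ b := hac.trans (hce.trans heb)
  have hc : c ∈ Icc a b := ⟨hac, hce.trans heb⟩
  have he : e ∈ Icc a b := ⟨hac.trans hce, heb⟩
  have hfg : ∀ k, IntervalIntegrable (fun x => |f k x - g x|) volume a b := fun k =>
    ((continuousOn_of_eq_add_integral (hf' k) (hf k) hab).sub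
      (continuousOn_of_eq_add_integral hg' hg hab)).abs.intervalIntegrable_of_Icc hab
  refine eventually_lt_integral_abs_deriv (fun k => (hf' k).mono_set_Icc hc he)
    (fun k => eq_add_integral_of_Icc_subset (hf' k) (hf k) hac hce heb) (hg'.mono_set_Icc hc he)
    (eq_add_integral_of_Icc_subset hg' hg hac hce heb) ?_ hce
  exact squeeze_zero (fun k => integral_nonneg hce fun _ _ => abs_nonneg _)
    (fun k => integral_mono_interval hac hce heb (ae_of_all _ fun _ => abs_nonneg _) (hfg k)) hL1

end Primitive

theorem stmt6 (a b : ℝ) (hab : a < b) (f : ℕ → ℝ → ℝ) (f' : ℕ → ℝ → ℝ)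
    (g : ℝ → ℝ) (g' : ℝ → ℝ)
    (hfint : ∀ k, IntegrableOn (f' k) (Set.Ioo a b))
    (hfrep : ∀ k, ∀ x ∈ Set.Icc a b, f k x = f k a + ∫ t in a..x, f' k t)
    (hgint : IntegrableOn g' (Set.Ioo a b))
    (hgrep : ∀ x ∈ Set.Icc a b, g x = g a + ∫ t in a..x, g' t)
    (hL1 : Tendsto (fun k => ∫ x in Set.Ioo a b, |f k x - g x|) atTop (nhds 0))
    (hTV : Tendsto (fun k => ∫ x in Set.Ioo a b, |f' k x|) atTop
      (nhds (∫ x in Set.Ioo a b, |g' x|))) :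
    ∀ c e : ℝ, a ≤ c → c < e → e ≤ b →
      Tendsto (fun k => ∫ x in Set.Ioo c e, |f' k x|) atTop
        (nhds (∫ x in Set.Ioo c e, |g' x|)) := by
  intro c e hac hce heb
  have hf' k := (intervalIntegrable_iff_integrableOn_Ioo_of_le hab.le).2 (hfint k)
  have hg' := (intervalIntegrable_iff_integrableOn_Ioo_of_le hab.le).2 hgint
  have hlsc {p q : ℝ} (hap : a ≤ p) (hpq : p ≤ q) (hqb : q ≤ b) :=
    eventually_lt_integral_abs_deriv_of_Icc_subset hf' hfrep hg' hgrep
      (by simpa only [integral_Ioo_eq_intervalIntegral _ hab.le] using hL1) hap hpq hqb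
  have hsplit {φ : ℝ → ℝ} (hφ : IntervalIntegrable φ volume a b) :
      ∫ x in a..b, |φ x| = (∫ x in c..e, |φ x|) + ((∫ x in a..c, |φ x|) + ∫ x in e..b, |φ x|) := by
    have hc : c ∈ Icc a b := ⟨hac, hce.le.trans heb⟩
    have he : e ∈ Icc a b := ⟨hac.trans hce.le, heb⟩
    rw [← integral_add_adjacent_intervals (hφ.abs.mono_set_Icc (left_mem_Icc.2 hab.le) hc)
      (hφ.abs.mono_set_Icc hc (right_mem_Icc.2 hab.le)),
      ← integral_add_adjacent_intervals (hφ.abs.mono_set_Icc hc he)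
      (hφ.abs.mono_set_Icc he (right_mem_Icc.2 hab.le))]
    ring
  simp only [integral_Ioo_eq_intervalIntegral _ hab.le, hsplit (hf' _), hsplit hg'] at hTV
  simp only [integral_Ioo_eq_intervalIntegral _ hce.le]
  exact tendsto_of_tendsto_add_of_forall_lt_eventually_lt (hlsc hac hce.le heb)
    (eventually_lt_add_of_forall_lt_eventually_lt (hlsc le_rfl hac (hce.le.trans heb))
      (hlsc (hac.trans hce.le) heb le_rfl)) hTV
end

section
/- Let φ : S¹ → S¹ be Lipschitz, f(θ) := φ(cos θ, sin θ) = (f₁(θ), f₂(θ)), and let Φ : [0,2π] → ℝ be a continuous lifting of φ, i.e. f(θ) = (cos Φ(θ), sin Φ(θ)) on [0,2π]. Then Φ(2π) − Φ(0) = ∫_0^{2π} (f₁(θ) f₂'(θ) − f₂(θ) f₁'(θ)) dθ, where f₁', f₂' are the a.e.-defined derivatives of the Lipschitz functions f₁, f₂. In particular the degree deg(φ) := (Φ(2π) − Φ(0))/(2π) equals (1/2π) ∫_0^{2π} (f₁ f₂' − f₂ f₁') dθ. -/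
open MeasureTheory Filter Set Real

noncomputable section

abbrev E2 : Type := EuclideanSpace ℝ (Fin 2)

def circ (θ : ℝ) : E2 := !₂[Real.cos θ, Real.sin θ]

/-!
A continuous lift `Φ` of a `K`-Lipschitz circle-valued map `f = circ ∘ Φ` is itself Lipschitz:
by uniform continuity, nearby values of `Φ` differ by at most `π`, and for such values Jordan's
inequality bounds `|Φ x - Φ y|` by `π / 2` times the chord `‖f x - f y‖`; a uniform local
Lipschitz bound then chains along a fine subdivision to a global one. Hence `Φ` is absolutely
continuous, so `Φ b - Φ a = ∫ Φ'`, and differentiating `f = (cos Φ, sin Φ)` gives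
`Φ' = f₁ f₂' - f₂ f₁'` almost everywhere.
-/

open Topology

theorem LipschitzOnWith.of_dist_le_mul_of_dist_lt {E α : Type*} [SeminormedAddCommGroup E]
    [NormedSpace ℝ E] [PseudoMetricSpace α] {f : E → α} {s : Set E} (hs : Convex ℝ s)
    {K : NNReal} {δ : ℝ} (hδ : 0 < δ)
    (h : ∀ x ∈ s, ∀ y ∈ s, dist x y < δ → dist (f x) (f y) ≤ K * dist x y) :
    LipschitzOnWith K f s := by
  rw [lipschitzOnWith_iff_dist_le_mul]
  intro x hx y hy
  obtain ⟨n, hn⟩ := exists_nat_gt (dist x y / δ)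
  have hn0 : (0 : ℝ) < n := lt_of_le_of_lt (by positivity) hn
  set p : ℕ → E := fun i => x + ((i : ℝ) / n) • (y - x)
  have hp_mem : ∀ i ≤ n, p i ∈ s := fun i hi =>
    hs.add_smul_sub_mem hx hy
      ⟨by positivity, div_le_one_of_le₀ (by exact_mod_cast hi) hn0.le⟩
  have hp_step : ∀ i, dist (p i) (p (i + 1)) = dist x y / n := by
    intro i
    rw [dist_comm, dist_eq_norm, add_sub_add_left_eq_sub, ← sub_smul, norm_smul, Nat.cast_succ,
      add_div, add_sub_cancel_left, Real.norm_of_nonneg (by positivity), dist_eq_norm']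
    ring
  calc dist (f x) (f y) = dist (f (p 0)) (f (p n)) := by simp [p, hn0.ne']
    _ ≤ ∑ i ∈ Finset.range n, dist (f (p i)) (f (p (i + 1))) :=
        dist_le_range_sum_dist (f ∘ p) n
    _ ≤ ∑ i ∈ Finset.range n, K * (dist x y / n) := by
        refine Finset.sum_le_sum fun i hi => ?_
        have hi : i < n := Finset.mem_range.mp hi
        rw [← hp_step i]
        refine h _ (hp_mem i hi.le) _ (hp_mem (i + 1) hi) ?_
        rw [hp_step, div_lt_iff₀ hn0]
        rwa [div_lt_iff₀ hδ, mul_comm] at hn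
    _ = K * dist x y := by
        rw [Finset.sum_const, Finset.card_range, nsmul_eq_mul]
        field_simp

@[simp] theorem circ_apply_zero (θ : ℝ) : circ θ 0 = cos θ := rfl

@[simp] theorem circ_apply_one (θ : ℝ) : circ θ 1 = sin θ := rfl

theorem norm_circ (θ : ℝ) : ‖circ θ‖ = 1 := by
  simp [EuclideanSpace.norm_eq, Fin.sum_univ_two]

theorem norm_circ_sub (a b : ℝ) : ‖circ a - circ b‖ = 2 * |sin ((a - b) / 2)| := by
  have hchord : (cos a - cos b) ^ 2 + (sin a - sin b) ^ 2 = (2 * |sin ((a - b) / 2)|) ^ 2 := by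
    have hhalf : sin ((a - b) / 2) ^ 2 = (1 - cos (a - b)) / 2 := by
      rw [sin_sq_eq_half_sub, mul_div_cancel₀ _ two_ne_zero]; ring
    rw [mul_pow, sq_abs, hhalf, cos_sub]
    nlinarith [sin_sq_add_cos_sq a, sin_sq_add_cos_sq b]
  rw [EuclideanSpace.norm_eq, ← sqrt_sq (by positivity : 0 ≤ 2 * |sin ((a - b) / 2)|), ← hchord]
  simp [Fin.sum_univ_two]

theorem lipschitzWith_circ : LipschitzWith 1 circ := by
  refine LipschitzWith.of_dist_le_mul fun a b => ?_
  rw [dist_eq_norm, norm_circ_sub, Real.dist_eq, NNReal.coe_one, one_mul]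
  calc 2 * |sin ((a - b) / 2)| ≤ 2 * |(a - b) / 2| :=
        mul_le_mul_of_nonneg_left abs_sin_le_abs zero_le_two
    _ = |a - b| := by rw [abs_div, abs_two]; ring

theorem abs_sub_le_mul_norm_circ_sub {a b : ℝ} (h : |a - b| ≤ π) :
    |a - b| ≤ π / 2 * ‖circ a - circ b‖ := by
  have hjordan := mul_abs_le_abs_sin (x := (a - b) / 2)
    (by rw [abs_div, abs_two]; linarith [pi_pos])
  rw [abs_div, abs_two] at hjordan
  rw [norm_circ_sub]
  calc |a - b| = π / 2 * (2 * (2 / π * (|a - b| / 2))) := by field_simp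
    _ ≤ π / 2 * (2 * |sin ((a - b) / 2)|) := by gcongr

theorem LipschitzOnWith.of_circ_lift {E : Type*} [SeminormedAddCommGroup E] [NormedSpace ℝ E]
    {f : E → E2} {Φ : E → ℝ} {s : Set E} {K : NNReal} (hs_cpt : IsCompact s) (hs_conv : Convex ℝ s)
    (hf : LipschitzOnWith K f s) (hΦc : ContinuousOn Φ s) (hΦ : ∀ x ∈ s, f x = circ (Φ x)) :
    LipschitzOnWith (NNReal.pi / 2 * K) Φ s := by
  obtain ⟨δ, hδ, hΦδ⟩ :=
    Metric.uniformContinuousOn_iff.mp (hs_cpt.uniformContinuousOn_of_continuous hΦc) π pi_pos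
  refine .of_dist_le_mul_of_dist_lt hs_conv hδ fun x hx y hy hxy => ?_
  have hclose : |Φ x - Φ y| ≤ π := (hΦδ x hx y hy hxy).le
  calc dist (Φ x) (Φ y) ≤ π / 2 * ‖circ (Φ x) - circ (Φ y)‖ :=
        abs_sub_le_mul_norm_circ_sub hclose
    _ = π / 2 * dist (f x) (f y) := by rw [hΦ x hx, hΦ y hy, dist_eq_norm]
    _ ≤ π / 2 * (K * dist x y) := by gcongr; exact hf.dist_le_mul x hx y hy
    _ = ↑(NNReal.pi / 2 * K) * dist x y := by push_cast [NNReal.coe_real_pi]; ring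

theorem mul_deriv_sub_mul_deriv_eq_deriv_of_eventuallyEq_circ {f : ℝ → E2} {Φ : ℝ → ℝ} {θ : ℝ}
    (hf : f =ᶠ[𝓝 θ] circ ∘ Φ) (hΦ : DifferentiableAt ℝ Φ θ) :
    f θ 0 * deriv (fun t => f t 1) θ - f θ 1 * deriv (fun t => f t 0) θ = deriv Φ θ := by
  have hcos : (fun t => f t 0) =ᶠ[𝓝 θ] fun t => cos (Φ t) := hf.mono fun t ht => by simp [ht]
  have hsin : (fun t => f t 1) =ᶠ[𝓝 θ] fun t => sin (Φ t) := hf.mono fun t ht => by simp [ht]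
  rw [hcos.deriv_eq, hsin.deriv_eq, hΦ.hasDerivAt.cos.deriv, hΦ.hasDerivAt.sin.deriv,
    hf.eq_of_nhds, Function.comp_apply, circ_apply_zero, circ_apply_one]
  linear_combination deriv Φ θ * sin_sq_add_cos_sq (Φ θ)

theorem sub_eq_integral_of_circ_lift {f : ℝ → E2} {Φ : ℝ → ℝ} {a b : ℝ} {K : NNReal}
    (hab : a ≤ b) (hf : LipschitzOnWith K f (Icc a b)) (hΦc : ContinuousOn Φ (Icc a b))
    (hΦ : ∀ θ ∈ Icc a b, f θ = circ (Φ θ)) :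
    Φ b - Φ a =
      ∫ θ in a..b, (f θ 0 * deriv (fun t => f t 1) θ - f θ 1 * deriv (fun t => f t 0) θ) := by
  have hac : AbsolutelyContinuousOnInterval Φ a b := by
    refine LipschitzOnWith.absolutelyContinuousOnInterval (K := NNReal.pi / 2 * K) ?_
    rw [uIcc_of_le hab]
    exact .of_circ_lift isCompact_Icc (convex_Icc a b) hf hΦc hΦ
  rw [← hac.integral_deriv_eq_sub]
  refine intervalIntegral.integral_congr_ae ?_
  filter_upwards [hac.ae_differentiableAt, (countable_singleton b).ae_notMem volume]
    with θ hdiff hθb hθ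
  refine (mul_deriv_sub_mul_deriv_eq_deriv_of_eventuallyEq_circ ?_
    (hdiff (uIoc_subset_uIcc hθ))).symm
  rw [uIoc_of_le hab] at hθ
  filter_upwards [Ioo_mem_nhds hθ.1 (lt_of_le_of_ne hθ.2 hθb)] with t ht
  exact hΦ t (Ioo_subset_Icc_self ht)

theorem stmt15_general (φ : E2 → E2) (K : NNReal)
    (hlip : LipschitzOnWith K φ (Metric.sphere (0 : E2) 1))
    (Φ : ℝ → ℝ) (hΦc : ContinuousOn Φ (Set.Icc 0 (2 * π)))
    (hΦ : ∀ θ ∈ Set.Icc 0 (2 * π), φ (circ θ) = circ (Φ θ)) :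
    Φ (2 * π) - Φ 0
      = ∫ θ in (0 : ℝ)..(2 * π),
          (φ (circ θ) 0 * deriv (fun t => φ (circ t) 1) θ
            - φ (circ θ) 1 * deriv (fun t => φ (circ t) 0) θ) ∧
    (Φ (2 * π) - Φ 0) / (2 * π)
      = (1 / (2 * π)) * ∫ θ in (0 : ℝ)..(2 * π),
          (φ (circ θ) 0 * deriv (fun t => φ (circ t) 1) θ
            - φ (circ θ) 1 * deriv (fun t => φ (circ t) 0) θ) := by
  have hcirc : MapsTo circ univ (Metric.sphere 0 1) := fun θ _ => by simp [norm_circ]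
  have hf : LipschitzOnWith (K * 1) (fun θ => φ (circ θ)) (Icc 0 (2 * π)) :=
    (hlip.comp lipschitzWith_circ.lipschitzOnWith hcirc).mono (subset_univ _)
  have hwinding := sub_eq_integral_of_circ_lift (by positivity) hf hΦc hΦ
  exact ⟨hwinding, by rw [hwinding]; ring⟩

theorem stmt15 (φ : E2 → E2) (K : NNReal)
    (hlip : LipschitzOnWith K φ (Metric.sphere (0 : E2) 1))
    (hsph : ∀ x : E2, ‖x‖ = 1 → ‖φ x‖ = 1)
    (Φ : ℝ → ℝ) (hΦc : ContinuousOn Φ (Set.Icc 0 (2 * π)))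
    (hΦ : ∀ θ ∈ Set.Icc 0 (2 * π), φ (circ θ) = circ (Φ θ)) :
    Φ (2 * π) - Φ 0
      = ∫ θ in (0 : ℝ)..(2 * π),
          (φ (circ θ) 0 * deriv (fun t => φ (circ t) 1) θ
            - φ (circ θ) 1 * deriv (fun t => φ (circ t) 0) θ) ∧
    (Φ (2 * π) - Φ 0) / (2 * π)
      = (1 / (2 * π)) * ∫ θ in (0 : ℝ)..(2 * π),
          (φ (circ θ) 0 * deriv (fun t => φ (circ t) 1) θ
            - φ (circ θ) 1 * deriv (fun t => φ (circ t) 0) θ) :=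
  stmt15_general φ K hlip Φ hΦc hΦ
end
end
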